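/- Let λ > 0 and y ∈ ℝ^M, and let x⋆ be a minimizer of problem (P). Suppose the norm A is decomposable at u⋆ := L* x⋆ with data (T, e), and set S := T⊥. If for every h ∈ ker(Φ) with h ≠ 0 one has ⟨L_T* h, e⟩ < A(L_S* h), then x⋆ is the unique minimizer of (P). -/

import Mathlib

open RealInnerProductSpace

noncomputable section

abbrev Euc (n : ℕ) := EuclideanSpace ℝ (Fin n)

def proj {n : ℕ} (V : Submodule ℝ (Euc n)) : Euc n →L[ℝ] Euc n :=
  V.subtypeL.comp (V.orthogonalProjectionOnto)

def dualNorm {n : ℕ} (A : Euc n → ℝ) (α : Euc n) : ℝ :=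
  sSup {r : ℝ | ∃ v : Euc n, A v ≤ 1 ∧ r = ⟪α, v⟫}

def subdiff {n : ℕ} (f : Euc n → ℝ) (x : Euc n) : Set (Euc n) :=
  {g : Euc n | ∀ y : Euc n, f x + ⟪g, y - x⟫ ≤ f y}

def IsNorm {n : ℕ} (A : Euc n → ℝ) : Prop :=
  (∀ x, A x = 0 ↔ x = 0) ∧ (∀ (c : ℝ) (x : Euc n), A (c • x) = |c| * A x) ∧
    (∀ x y, A (x + y) ≤ A x + A y)

def Decomposable {n : ℕ} (A : Euc n → ℝ) (u : Euc n) (T : Submodule ℝ (Euc n)) (e : Euc n) :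
    Prop :=
  e ∈ T ∧
  subdiff A u = {α : Euc n | proj T α = e ∧ dualNorm A (proj Tᗮ α) ≤ 1} ∧
  ∀ z : Euc n, z ∈ Tᗮ →
    A z = sSup {r : ℝ | ∃ v ∈ (Tᗮ : Submodule ℝ (Euc n)), dualNorm A v ≤ 1 ∧ r = ⟪v, z⟫}

def obj {N M P : ℕ} (Φ : Euc N →L[ℝ] Euc M) (L : Euc P →L[ℝ] Euc N) (A : Euc P → ℝ)
    (y : Euc M) (lam : ℝ) (x : Euc N) : ℝ :=
  (1/2) * ‖y - Φ x‖^2 + lam * A (ContinuousLinearMap.adjoint L x)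

def SC {N M P : ℕ} (Φ : Euc N →L[ℝ] Euc M) (L : Euc P →L[ℝ] Euc N) (A : Euc P → ℝ)
    (x : Euc N) (η : Euc M) (α : Euc P) : Prop :=
  α ∈ subdiff A (ContinuousLinearMap.adjoint L x) ∧
  ContinuousLinearMap.adjoint Φ η = L α ∧
  L α ∈ subdiff (fun z => A (ContinuousLinearMap.adjoint L z)) x

def breg {n : ℕ} (A : Euc n → ℝ) (α u u₀ : Euc n) : ℝ :=
  A u - A u₀ - ⟪α, u - u₀⟫

/-!
Two minimizers `x, x⋆` of (P) have the same image under `Φ`, by strict convexity of the data term,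
and hence the same regularizer value `A(L* x) = A(L* x⋆)`. Testing the subgradients `e + v`
(`v ∈ S`, `A*(v) ≤ 1`) of `A` at `u⋆` against `d := L*(x - x⋆)` and taking the supremum over `v`
gives `A(P_S d) ≤ -⟨e, d⟩ = -⟨P_T d, e⟩`, which the null space property applied to
`x⋆ - x ∈ ker Φ` forbids unless `x = x⋆`.
-/

section Projection

variable {n : ℕ} {V : Submodule ℝ (Euc n)}

lemma proj_eq_starProjection (V : Submodule ℝ (Euc n)) : proj V = V.starProjection := rfl

lemma proj_apply_mem (V : Submodule ℝ (Euc n)) (d : Euc n) : proj V d ∈ V :=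
  V.starProjection_apply_mem d

lemma inner_proj_left_of_mem {v : Euc n} (hv : v ∈ V) (d : Euc n) :
    ⟪proj V d, v⟫ = ⟪d, v⟫ := by
  rw [proj_eq_starProjection, Submodule.inner_starProjection_left_eq_right,
    Submodule.starProjection_eq_self_iff.mpr hv]

lemma proj_add_of_mem_of_mem_orthogonal {a b : Euc n} (ha : a ∈ V) (hb : b ∈ Vᗮ) :
    proj V (a + b) = a := by
  rw [proj_eq_starProjection, map_add, Submodule.starProjection_eq_self_iff.mpr ha,
    (Submodule.starProjection_apply_eq_zero_iff V).mpr hb, add_zero]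

lemma proj_orthogonal_add_of_mem_of_mem_orthogonal {a b : Euc n} (ha : a ∈ V) (hb : b ∈ Vᗮ) :
    proj Vᗮ (a + b) = b := by
  rw [add_comm]
  exact proj_add_of_mem_of_mem_orthogonal hb (Submodule.le_orthogonal_orthogonal V ha)

end Projection

lemma dualNorm_zero {n : ℕ} (A : Euc n → ℝ) : dualNorm A 0 = 0 := by
  have hsub : {r : ℝ | ∃ v : Euc n, A v ≤ 1 ∧ r = ⟪(0 : Euc n), v⟫} ⊆ {0} := by
    rintro r ⟨v, -, rfl⟩
    simp
  rcases Set.subset_singleton_iff_eq.mp hsub with h | h <;> rw [dualNorm, h] <;> simp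

namespace IsNorm

variable {n : ℕ} {A : Euc n → ℝ}

lemma apply_neg (hA : IsNorm A) (z : Euc n) : A (-z) = A z := by
  simpa using hA.2.1 (-1) z

lemma convexOn (hA : IsNorm A) : ConvexOn ℝ Set.univ A := by
  refine ⟨convex_univ, fun x _ x' _ a b ha hb _ => ?_⟩
  calc A (a • x + b • x') ≤ A (a • x) + A (b • x') := hA.2.2 _ _
    _ = a • A x + b • A x' := by
      rw [hA.2.1, hA.2.1, abs_of_nonneg ha, abs_of_nonneg hb, smul_eq_mul, smul_eq_mul]

end IsNorm

lemma map_eq_of_isMinimizer_sqLoss_add_convex {E F : Type*} [AddCommGroup E] [Module ℝ E]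
    [NormedAddCommGroup F] [InnerProductSpace ℝ F] (Φ : E →ₗ[ℝ] F) {R : E → ℝ}
    (hR : ConvexOn ℝ Set.univ R) (y : F) {x x' : E}
    (hx : ∀ z, (1/2) * ‖y - Φ x‖^2 + R x ≤ (1/2) * ‖y - Φ z‖^2 + R z)
    (hx' : ∀ z, (1/2) * ‖y - Φ x'‖^2 + R x' ≤ (1/2) * ‖y - Φ z‖^2 + R z) :
    Φ x = Φ x' := by
  set a := y - Φ x
  set b := y - Φ x'
  set m : E := (1/2 : ℝ) • x + (1/2 : ℝ) • x'
  have hres : y - Φ m = (1/2 : ℝ) • (a + b) := by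
    simp only [m, a, b, map_add, map_smul]
    module
  have hnorm : ‖y - Φ m‖^2 = (1/4) * ‖a + b‖^2 := by
    rw [hres, norm_smul, mul_pow]
    norm_num
  have hRm : R m ≤ (1/2) * R x + (1/2) * R x' :=
    hR.2 (Set.mem_univ x) (Set.mem_univ x') (by norm_num) (by norm_num) (by norm_num)
  have hpar := parallelogram_law_with_norm ℝ a b
  -- By the parallelogram law the objective at the midpoint `m` falls short of its value at the
  -- minimizers by at least `‖a - b‖² / 8`.
  have hsq : ‖a - b‖^2 ≤ 0 := by
    have := hx m
    rw [hnorm] at this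
    nlinarith [hx x', hx' x]
  have hab : a = b := sub_eq_zero.mp (norm_eq_zero.mp (by nlinarith [norm_nonneg (a - b)]))
  exact sub_right_injective hab

namespace Decomposable

variable {n : ℕ} {A : Euc n → ℝ} {u : Euc n} {T : Submodule ℝ (Euc n)} {e : Euc n}

lemma add_mem_subdiff (hdec : Decomposable A u T e) {v : Euc n} (hv : v ∈ Tᗮ)
    (hv1 : dualNorm A v ≤ 1) : e + v ∈ subdiff A u := by
  rw [hdec.2.1]
  exact ⟨proj_add_of_mem_of_mem_orthogonal hdec.1 hv,
    by rwa [proj_orthogonal_add_of_mem_of_mem_orthogonal hdec.1 hv]⟩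

lemma apply_proj_orthogonal_sub_le_breg (hdec : Decomposable A u T e) (w : Euc n) :
    A (proj Tᗮ (w - u)) ≤ breg A e w u := by
  rw [hdec.2.2 _ (proj_apply_mem Tᗮ _)]
  refine csSup_le ⟨0, 0, Tᗮ.zero_mem, by rw [dualNorm_zero]; norm_num, by simp⟩ ?_
  rintro r ⟨v, hv, hv1, rfl⟩
  have hsub := hdec.add_mem_subdiff hv hv1 w
  rw [real_inner_comm, inner_proj_left_of_mem hv, real_inner_comm]
  rw [inner_add_left] at hsub
  unfold breg
  linarith

end Decomposable

theorem stmt0 {N M P : ℕ} (Φ : Euc N →L[ℝ] Euc M) (L : Euc P →L[ℝ] Euc N)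
    (A : Euc P → ℝ) (hA : IsNorm A) (lam : ℝ) (hlam : 0 < lam) (y : Euc M)
    (xs : Euc N) (hmin : ∀ x, obj Φ L A y lam xs ≤ obj Φ L A y lam x)
    (T : Submodule ℝ (Euc P)) (e : Euc P)
    (hdec : Decomposable A (ContinuousLinearMap.adjoint L xs) T e)
    (hNSP : ∀ h : Euc N, Φ h = 0 → h ≠ 0 →
      ⟪proj T (ContinuousLinearMap.adjoint L h), e⟫ < A (proj Tᗮ (ContinuousLinearMap.adjoint L h))) :
    ∀ x : Euc N, (∀ z, obj Φ L A y lam x ≤ obj Φ L A y lam z) → x = xs := by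
  intro x hx
  set Lt := ContinuousLinearMap.adjoint L
  have hR : ConvexOn ℝ Set.univ (fun z => lam * A (Lt z)) :=
    (hA.convexOn.comp_linearMap Lt.toLinearMap).smul hlam.le
  have hΦ : Φ x = Φ xs := map_eq_of_isMinimizer_sqLoss_add_convex Φ.toLinearMap hR y hx hmin
  have hAeq : A (Lt x) = A (Lt xs) := by
    have h₁ := hx xs
    have h₂ := hmin x
    simp only [obj, hΦ] at h₁ h₂
    exact mul_left_cancel₀ hlam.ne' (by linarith)
  by_contra hne
  have hbound := hdec.apply_proj_orthogonal_sub_le_breg (Lt x)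
  have hnsp := hNSP (xs - x) (by rw [map_sub, hΦ, sub_self]) (sub_ne_zero.mpr (Ne.symm hne))
  rw [show Lt (xs - x) = -(Lt x - Lt xs) by rw [map_sub, neg_sub], map_neg, map_neg,
    inner_neg_left, hA.apply_neg, inner_proj_left_of_mem hdec.1, real_inner_comm] at hnsp
  unfold breg at hbound
  linarith
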